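/- arXiv:1502.06740 — 2 statements merged into one kernel-verified Lean document; each statement's English description precedes it below -/
import Mathlib

section
/- Let n ≥ 1 and let Ω ⊆ ℝⁿ be a nonempty bounded open set which has the ε-cone property for some ε ∈ (0, π/2]. Then Ω satisfies the volume doubling property with exponent δ = n; that is, there exists a constant K > 0 such that for every x ∈ Ω and all radii 0 < r ≤ s one has V_Ω(x,s) ≤ K (s/r)ⁿ V_Ω(x,r). -/
open MeasureTheory Metric Set

noncomputable section

/-- The open truncated cone with vertex `y`, direction `ξ`, aperture `ε` and length `r`:
`{z : (z−y)·ξ ≥ cos(ε)|z−y| and 0 < |z−y| < r}`. -/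
def coneSet (n : ℕ) (y ξ : EuclideanSpace ℝ (Fin n)) (ε r : ℝ) :
    Set (EuclideanSpace ℝ (Fin n)) :=
  {z | Real.cos ε * ‖z - y‖ ≤ (inner ℝ (z - y) ξ : ℝ) ∧ 0 < ‖z - y‖ ∧ ‖z - y‖ < r}

/-- `Ω` has the `ε`-cone property: for every boundary point `x` there is a unit direction
`ξ` such that for every `y ∈ closure Ω ∩ B(x,ε)` the cone `𝒞(y,ξ,ε)` is contained in `Ω`. -/
def HasConeProperty (n : ℕ) (Ω : Set (EuclideanSpace ℝ (Fin n))) (ε : ℝ) : Prop :=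
  ∀ x ∈ frontier Ω, ∃ ξ : EuclideanSpace ℝ (Fin n), ‖ξ‖ = 1 ∧
    ∀ y ∈ closure Ω ∩ ball x ε, coneSet n y ξ ε ε ⊆ Ω

/-!
Every ball `B(x, r)` centred in `Ω` contains a ball of radius comparable to `min r ε` lying in `Ω`:
either `B(x, r/2)` already lies in `Ω`, or a boundary point `y` closest to `x` is within `r/2`, and
the cone at `x` in the direction attached to `y` contains such a ball. Comparing with the volume
of `B(x, min s (diam Ω + 1)) ⊇ Ω ∩ B(x, s)` gives the doubling bound with exponent `n`.
-/

theorem ball_subset_coneSet {n : ℕ} {x ξ : EuclideanSpace ℝ (Fin n)} (hξ : ‖ξ‖ = 1)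
    {ε r : ℝ} (hcos : 0 ≤ Real.cos ε) (hr : 0 < r) :
    ball (x + (r / 2) • ξ) ((1 - Real.cos ε) / 4 * r) ⊆ coneSet n x ξ ε r := by
  intro z hz
  set ρ := (1 - Real.cos ε) / 4 * r with hρ
  set w := z - (x + (r / 2) • ξ)
  have hw : ‖w‖ < ρ := by rwa [mem_ball, dist_eq_norm] at hz
  have hzx : z - x = w + (r / 2) • ξ := by simp only [w]; abel
  have hnorm : ‖(r / 2) • ξ‖ = r / 2 := by
    rw [norm_smul, hξ, mul_one, Real.norm_of_nonneg (by positivity)]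
  have hupper : ‖z - x‖ ≤ ‖w‖ + r / 2 := by
    rw [hzx]; exact (norm_add_le _ _).trans_eq (by rw [hnorm])
  have hinner : r / 2 - ‖w‖ ≤ inner ℝ (z - x) ξ := by
    have hwξ := abs_real_inner_le_norm w ξ
    rw [hξ, mul_one] at hwξ
    rw [hzx, inner_add_left, real_inner_smul_left, real_inner_self_eq_norm_sq, hξ, one_pow,
      mul_one]
    linarith [neg_abs_le (inner ℝ w ξ)]
  have hlower : r / 2 - ‖w‖ ≤ ‖z - x‖ :=
    hinner.trans (real_inner_le_norm _ _ |>.trans (by rw [hξ, mul_one]))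
  have hcos1 := Real.cos_le_one ε
  have hρr : ρ < r / 2 := by rw [hρ]; nlinarith
  refine ⟨?_, by linarith, by linarith⟩
  -- `ρ` is chosen so that `cos ε * (r/2 + ρ) ≤ r/2 - ρ`
  calc Real.cos ε * ‖z - x‖ ≤ Real.cos ε * (r / 2 + ρ) := by gcongr; linarith
    _ ≤ r / 2 - ρ := by rw [hρ]; nlinarith
    _ ≤ inner ℝ (z - x) ξ := by linarith

theorem HasConeProperty.exists_ball_subset_inter_ball {n : ℕ}
    {Ω : Set (EuclideanSpace ℝ (Fin n))} {ε : ℝ} (hcone : HasConeProperty n Ω ε) (hε : 0 < ε)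
    (hcos : 0 ≤ Real.cos ε) {x : EuclideanSpace ℝ (Fin n)} (hx : x ∈ Ω) {r : ℝ} (hr : 0 < r) :
    ∃ z, ball z ((1 - Real.cos ε) / 4 * min r ε) ⊆ Ω ∩ ball x r := by
  set r' := min r ε
  have hr' : 0 < r' := lt_min hr hε
  have hr'r : r' ≤ r := min_le_left r ε
  by_cases hball : ball x (r' / 2) ⊆ Ω
  · refine ⟨x, fun w hw ↦ ?_⟩
    have hρ : (1 - Real.cos ε) / 4 * r' ≤ r' / 2 := by nlinarith
    have hw' : w ∈ ball x (r' / 2) := ball_subset_ball hρ hw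
    exact ⟨hball hw', ball_subset_ball (by linarith) hw'⟩
  obtain ⟨w, hw, hwΩ⟩ := not_subset.mp hball
  obtain ⟨y, hy, hxy⟩ :=
    exists_mem_frontier_infDist_compl_eq_dist hx (ne_univ_iff_exists_notMem Ω |>.mpr ⟨w, hwΩ⟩)
  have hxy' : dist x y < r' / 2 := hxy ▸ (infDist_le_dist_of_mem hwΩ).trans_lt (mem_ball'.mp hw)
  obtain ⟨ξ, hξ, hconeξ⟩ := hcone y hy
  have hx' : x ∈ closure Ω ∩ ball y ε :=
    ⟨subset_closure hx, mem_ball.mpr (by linarith [min_le_right r ε])⟩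
  refine ⟨x + (r' / 2) • ξ, (ball_subset_coneSet hξ hcos hr').trans ?_⟩
  rintro v ⟨hvξ, hv0, hvr'⟩
  refine ⟨hconeξ x hx' ⟨hvξ, hv0, hvr'.trans_le (min_le_right r ε)⟩, ?_⟩
  rw [mem_ball, dist_eq_norm]
  exact hvr'.trans_le hr'r

theorem exists_measure_inter_ball_le_of_exists_ball_subset {E : Type*} [NormedAddCommGroup E]
    [NormedSpace ℝ E] [FiniteDimensional ℝ E] [MeasurableSpace E] [BorelSpace E]
    (μ : Measure E) [μ.IsAddHaarMeasure] {Ω : Set E} (hbd : Bornology.IsBounded Ω) {c ε : ℝ}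
    (hc : 0 < c) (hε : 0 < ε)
    (hball : ∀ x ∈ Ω, ∀ r, 0 < r → ∃ z, ball z (c * min r ε) ⊆ Ω ∩ ball x r) :
    ∃ K : ℝ, 0 < K ∧ ∀ x ∈ Ω, ∀ r s : ℝ, 0 < r → r ≤ s →
      μ (Ω ∩ ball x s) ≤ ENNReal.ofReal (K * (s / r) ^ Module.finrank ℝ E) * μ (Ω ∩ ball x r) := by
  set d := Module.finrank ℝ E
  set D := diam Ω + 1
  have hD : 0 < D := by positivity
  set L := 1 + D / ε
  have hL1 : 1 ≤ L := le_add_of_nonneg_right (by positivity)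
  have hLD : D / ε ≤ L := le_add_of_nonneg_left zero_le_one
  refine ⟨(L / c) ^ d, by positivity, fun x hx r s hr hrs ↦ ?_⟩
  have hs : 0 < s := hr.trans_le hrs
  obtain ⟨z, hz⟩ := hball x hx r hr
  have hΩs : Ω ∩ ball x s ⊆ ball x (min s D) := fun w ⟨hwΩ, hws⟩ ↦
    lt_min hws ((dist_le_diam_of_mem hbd hwΩ hx).trans_lt (lt_add_one _))
  -- below `ε` the inner ball has radius `c r`; above `ε`, `Ω ⊆ B(x, D)` takes over
  have hmin : min s D ≤ L / c * (s / r) * (c * min r ε) := by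
    rw [show L / c * (s / r) * (c * min r ε) = L * s * (min r ε / r) by field_simp]
    rcases le_total r ε with hrε | hεr
    · rw [min_eq_left hrε, div_self hr.ne', mul_one]
      exact (min_le_left s D).trans (le_mul_of_one_le_left hs.le hL1)
    · rw [min_eq_right hεr]
      calc min s D ≤ D := min_le_right s D
        _ ≤ D * (s / r) := le_mul_of_one_le_right hD.le ((one_le_div hr).mpr hrs)
        _ = D / ε * s * (ε / r) := by field_simp
        _ ≤ L * s * (ε / r) := by gcongr
  calc μ (Ω ∩ ball x s) ≤ μ (ball x (min s D)) := measure_mono hΩs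
    _ = ENNReal.ofReal (min s D ^ d) * μ (ball 0 1) :=
        Measure.addHaar_ball_of_pos μ x (lt_min hs hD)
    _ ≤ ENNReal.ofReal ((L / c) ^ d * (s / r) ^ d * (c * min r ε) ^ d) * μ (ball 0 1) := by
        rw [← mul_pow, ← mul_pow]
        gcongr
    _ = ENNReal.ofReal ((L / c) ^ d * (s / r) ^ d) * μ (ball z (c * min r ε)) := by
        rw [Measure.addHaar_ball_of_pos μ z (by positivity), ENNReal.ofReal_mul (by positivity),
          ENNReal.ofReal_mul (by positivity), mul_assoc]
    _ ≤ ENNReal.ofReal ((L / c) ^ d * (s / r) ^ d) * μ (Ω ∩ ball x r) := by gcongr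

theorem volume_doubling_of_coneProperty_general (n : ℕ)
    (Ω : Set (EuclideanSpace ℝ (Fin n)))
    (hbd : Bornology.IsBounded Ω)
    (ε : ℝ) (hε : ε ∈ Set.Ioc 0 (Real.pi / 2))
    (hcone : HasConeProperty n Ω ε) :
    ∃ K : ℝ, 0 < K ∧ ∀ x ∈ Ω, ∀ r s : ℝ, 0 < r → r ≤ s →
      volume (Ω ∩ ball x s) ≤
        ENNReal.ofReal (K * (s / r) ^ n) * volume (Ω ∩ ball x r) := by
  obtain ⟨hε0, hεπ⟩ := hε
  have hcos : 0 ≤ Real.cos ε := Real.cos_nonneg_of_mem_Icc ⟨by linarith [Real.pi_pos], hεπ⟩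
  have hcos1 : Real.cos ε < 1 :=
    Real.cos_zero ▸ Real.cos_lt_cos_of_nonneg_of_le_pi_div_two le_rfl hεπ hε0
  have hc : 0 < (1 - Real.cos ε) / 4 := by linarith
  simpa only [finrank_euclideanSpace_fin] using
    exists_measure_inter_ball_le_of_exists_ball_subset volume hbd hc hε0
      fun x hx r hr ↦ hcone.exists_ball_subset_inter_ball hε0 hcos hx hr

/-- A nonempty bounded open set of `ℝⁿ` with the `ε`-cone property satisfies the volume
doubling property with exponent `n`. -/
theorem volume_doubling_of_coneProperty (n : ℕ) (hn : 1 ≤ n)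
    (Ω : Set (EuclideanSpace ℝ (Fin n))) (hne : Ω.Nonempty)
    (hbd : Bornology.IsBounded Ω) (hop : IsOpen Ω)
    (ε : ℝ) (hε : ε ∈ Set.Ioc 0 (Real.pi / 2))
    (hcone : HasConeProperty n Ω ε) :
    ∃ K : ℝ, 0 < K ∧ ∀ x ∈ Ω, ∀ r s : ℝ, 0 < r → r ≤ s →
      volume (Ω ∩ ball x s) ≤
        ENNReal.ofReal (K * (s / r) ^ n) * volume (Ω ∩ ball x r) :=
  volume_doubling_of_coneProperty_general n Ω hbd ε hε hcone
end
end

section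
/- Let (X,d) be a metric space equipped with a Borel measure μ, let n > 0 be a real number, and let Ω ⊆ X be a nonempty Borel set with finite diameter and finite measure μ(Ω) < ∞. Suppose there exist constants c₀, ρ > 0 such that μ(Ω ∩ B(x,r)) ≥ c₀ rⁿ for every x ∈ Ω and every 0 < r ≤ ρ, and constants c₁, r₁ > 0 such that μ(B(x,r)) ≤ c₁ rⁿ for every x ∈ X and every 0 < r ≤ r₁. Then there exists a constant K > 0 such that μ(Ω ∩ B(x,s)) ≤ K (s/r)ⁿ μ(Ω ∩ B(x,r)) for every x ∈ Ω and all 0 < r ≤ s. -/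
open MeasureTheory Metric Set

noncomputable section

/-- In a metric measure space, if `μ(Ω ∩ B(x,r)) ≥ c₀ rⁿ` for small radii (for `x ∈ Ω`)
and `μ(B(x,r)) ≤ c₁ rⁿ` for small radii (for every `x`), and `Ω` is a nonempty Borel set
of finite diameter and finite measure, then `Ω` satisfies the volume doubling property
with exponent `n`. -/
theorem volume_doubling_of_lower_and_upper_bounds
    {X : Type*} [MetricSpace X] [MeasurableSpace X] [BorelSpace X]
    (μ : Measure X) (n : ℝ) (hn : 0 < n)
    (Ω : Set X) (hne : Ω.Nonempty) (hmeas : MeasurableSet Ω)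
    (hdiam : EMetric.diam Ω < ⊤) (hfin : μ Ω < ⊤)
    (c₀ ρ : ℝ) (hc₀ : 0 < c₀) (hρ : 0 < ρ)
    (hlow : ∀ x ∈ Ω, ∀ r : ℝ, 0 < r → r ≤ ρ →
      ENNReal.ofReal (c₀ * r ^ n) ≤ μ (Ω ∩ ball x r))
    (c₁ r₁ : ℝ) (hc₁ : 0 < c₁) (hr₁ : 0 < r₁)
    (hup : ∀ x : X, ∀ r : ℝ, 0 < r → r ≤ r₁ →
      μ (ball x r) ≤ ENNReal.ofReal (c₁ * r ^ n)) :
    ∃ K : ℝ, 0 < K ∧ ∀ x ∈ Ω, ∀ r s : ℝ, 0 < r → r ≤ s →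
      μ (Ω ∩ ball x s) ≤ ENNReal.ofReal (K * (s / r) ^ n) * μ (Ω ∩ ball x r) := by
  set m : ℝ := min ρ r₁ with hm_def
  have hm : 0 < m := lt_min hρ hr₁
  have hmn : (0:ℝ) < m ^ n := Real.rpow_pos_of_pos hm n
  set M : ℝ := (μ Ω).toReal with hM_def
  have hM0 : 0 ≤ M := ENNReal.toReal_nonneg
  have hμΩ : μ Ω = ENNReal.ofReal M := (ENNReal.ofReal_toReal hfin.ne).symm
  set K : ℝ := c₁ / c₀ + M / (c₀ * m ^ n) + 1 with hK_def
  have hK : 0 < K := by positivity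
  refine ⟨K, hK, ?_⟩
  intro x hx r s hr hrs
  have hs : 0 < s := hr.trans_le hrs
  have hsr : 1 ≤ s / r := (one_le_div hr).2 hrs
  have hsrn : 1 ≤ (s / r) ^ n := Real.one_le_rpow hsr hn.le
  by_cases hcase : s ≤ m
  · -- small case: use upper bound at s, lower bound at r
    have h1 : μ (Ω ∩ ball x s) ≤ ENNReal.ofReal (c₁ * s ^ n) :=
      le_trans (measure_mono inter_subset_right)
        (hup x s hs (hcase.trans (min_le_right _ _)))
    have h2 : ENNReal.ofReal (c₀ * r ^ n) ≤ μ (Ω ∩ ball x r) :=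
      hlow x hx r hr ((hrs.trans hcase).trans (min_le_left _ _))
    calc μ (Ω ∩ ball x s) ≤ ENNReal.ofReal (c₁ * s ^ n) := h1
      _ ≤ ENNReal.ofReal (K * (s / r) ^ n) * ENNReal.ofReal (c₀ * r ^ n) := by
          rw [← ENNReal.ofReal_mul (by positivity)]
          apply ENNReal.ofReal_le_ofReal
          have hsn : (s / r) ^ n * r ^ n = s ^ n := by
            rw [← Real.mul_rpow (by positivity) hr.le, div_mul_cancel₀ _ hr.ne']
          have hKc : c₁ ≤ K * c₀ := by
            have : c₁ / c₀ ≤ K := by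
              rw [hK_def]; nlinarith [div_nonneg hM0 (mul_pos hc₀ hmn).le]
            calc c₁ = c₁ / c₀ * c₀ := by field_simp
              _ ≤ K * c₀ := by nlinarith
          calc c₁ * s ^ n = c₁ * ((s / r) ^ n * r ^ n) := by rw [hsn]
            _ ≤ K * c₀ * ((s / r) ^ n * r ^ n) := by
                have hp : (0:ℝ) ≤ (s / r) ^ n * r ^ n := by positivity
                exact mul_le_mul_of_nonneg_right hKc hp
            _ = K * (s / r) ^ n * (c₀ * r ^ n) := by ring
      _ ≤ ENNReal.ofReal (K * (s / r) ^ n) * μ (Ω ∩ ball x r) := by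
          exact mul_le_mul_right h2 _
  · -- big case: s > m
    push_neg at hcase
    set r' : ℝ := min r m with hr'_def
    have hr'0 : 0 < r' := lt_min hr hm
    have h2 : ENNReal.ofReal (c₀ * r' ^ n) ≤ μ (Ω ∩ ball x r) :=
      le_trans (hlow x hx r' hr'0 ((min_le_right _ _).trans (min_le_left _ _)))
        (measure_mono (inter_subset_inter_right _ (ball_subset_ball (min_le_left _ _))))
    have hkey : m ≤ s * r' / r := by
      rcases le_or_gt r m with h | h
      · have : r' = r := min_eq_left h
        rw [this]
        rw [mul_div_assoc, div_self hr.ne', mul_one]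
        exact hcase.le
      · have : r' = m := min_eq_right h.le
        rw [this]
        calc m = 1 * m := (one_mul m).symm
          _ ≤ s / r * m := by nlinarith
          _ = s * m / r := by ring
    have hreal : M ≤ K * (s / r) ^ n * (c₀ * r' ^ n) := by
      have hsn : (s / r) ^ n * r' ^ n = (s * r' / r) ^ n := by
        rw [← Real.mul_rpow (by positivity) hr'0.le]
        ring_nf
      have hmn' : m ^ n ≤ (s * r' / r) ^ n :=
        Real.rpow_le_rpow hm.le hkey hn.le
      have hKM : M / (c₀ * m ^ n) ≤ K := by
        rw [hK_def]; nlinarith [div_nonneg hc₁.le hc₀.le]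
      calc M = M / (c₀ * m ^ n) * (c₀ * m ^ n) := by field_simp
        _ ≤ K * (c₀ * m ^ n) := by
            apply mul_le_mul_of_nonneg_right hKM (by positivity)
        _ ≤ K * (c₀ * (s * r' / r) ^ n) := by
            apply mul_le_mul_of_nonneg_left _ hK.le
            exact mul_le_mul_of_nonneg_left hmn' hc₀.le
        _ = K * (s / r) ^ n * (c₀ * r' ^ n) := by rw [← hsn]; ring
    calc μ (Ω ∩ ball x s) ≤ μ Ω := measure_mono inter_subset_left
      _ = ENNReal.ofReal M := hμΩ
      _ ≤ ENNReal.ofReal (K * (s / r) ^ n * (c₀ * r' ^ n)) :=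
          ENNReal.ofReal_le_ofReal hreal
      _ = ENNReal.ofReal (K * (s / r) ^ n) * ENNReal.ofReal (c₀ * r' ^ n) :=
          ENNReal.ofReal_mul (by positivity)
      _ ≤ ENNReal.ofReal (K * (s / r) ^ n) * μ (Ω ∩ ball x r) :=
          mul_le_mul_right h2 _
end
end
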